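/- Let P ⊆ ℝ^k be a large-enough bounded convex polytope, W = P ∩ ℤ^k, and let C be a GKZ chamber. Set C_P = ⋂_{p∈P} (p + C). Then the window skeleton and the GIT skeleton agree over C_P: Λ_W ∩ (μ⁻¹(C_P) × ℝ^N) = Λ_C ∩ (μ⁻¹(C_P) × ℝ^N), where the first factor is the base point of the pair (x,ξ). (Theorem: no quasi-symmetry is needed.) -/

import Mathlib

open Pointwise
open scoped Classical

noncomputable section

/-- The conical Lagrangian `Λ₀ = SS(ℂ_{ℝ^N_{>0}})` over the origin. -/
def Lambda0 (N : ℕ) : Set ((Fin N → ℝ) × (Fin N → ℝ)) :=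
  {p | ∀ i, (0 < p.1 i ∧ p.2 i = 0) ∨ (p.1 i = 0 ∧ p.2 i ≤ 0)}

/-- The translated conical Lagrangian `Λ_w` for `w ∈ ℤ^N`. -/
def Lambdaw {N : ℕ} (w : Fin N → ℤ) : Set ((Fin N → ℝ) × (Fin N → ℝ)) :=
  {p | ((fun i => p.1 i - (w i : ℝ)), p.2) ∈ Lambda0 N}

/-- The window skeleton `Λ_W = ⋃ {Λ_w : w ∈ ℤ^N, μ(w) ∈ W}`. -/
def LambdaWin {N k : ℕ} (μ : (Fin N → ℝ) →ₗ[ℝ] (Fin k → ℝ)) (W : Set (Fin k → ℝ)) :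
    Set ((Fin N → ℝ) × (Fin N → ℝ)) :=
  ⋃ (w : Fin N → ℤ) (_ : μ (fun i => (w i : ℝ)) ∈ W), Lambdaw w

/-- The cone `τ_I` generated by the standard basis vectors `e_i`, `i ∈ I`. -/
def tauCone {N : ℕ} (I : Set (Fin N)) : Set (Fin N → ℝ) :=
  {x | ∀ i, 0 ≤ x i ∧ (i ∉ I → x i = 0)}

/-- The relative interior of `τ_I`. -/
def tauRelInt {N : ℕ} (I : Set (Fin N)) : Set (Fin N → ℝ) :=
  {x | ∀ i, (i ∈ I → 0 < x i) ∧ (i ∉ I → x i = 0)}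

/-- The complement of the union of the boundaries `∂C_I`, `C_I = μ(τ_I)`. -/
def gkzGood {N k : ℕ} (μ : (Fin N → ℝ) →ₗ[ℝ] (Fin k → ℝ)) : Set (Fin k → ℝ) :=
  {y | ∀ I : Set (Fin N), y ∉ frontier (μ '' tauCone I)}

/-- A GKZ chamber: a connected component of `ℝ^k ∖ ⋃_I ∂C_I`. -/
def IsGKZChamber {N k : ℕ} (μ : (Fin N → ℝ) →ₗ[ℝ] (Fin k → ℝ))
    (C : Set (Fin k → ℝ)) : Prop :=
  ∃ x ∈ gkzGood μ, C = connectedComponentIn (gkzGood μ) x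

/-- `ℐ_C = {I : μ⁻¹(C) ∩ relint(τ_I) ≠ ∅}`. -/
def chamberIdx {N k : ℕ} (μ : (Fin N → ℝ) →ₗ[ℝ] (Fin k → ℝ))
    (C : Set (Fin k → ℝ)) : Set (Set (Fin N)) :=
  {I | ((μ ⁻¹' C) ∩ tauRelInt I).Nonempty}

/-- The GIT (FLTZ) skeleton `Λ_C = ⋃_{I ∈ ℐ_C} (ℤ^N + ℝ^I) × (−σ_{I^c})`. -/
def LambdaGIT {N k : ℕ} (μ : (Fin N → ℝ) →ₗ[ℝ] (Fin k → ℝ))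
    (C : Set (Fin k → ℝ)) : Set ((Fin N → ℝ) × (Fin N → ℝ)) :=
  ⋃ I ∈ chamberIdx μ C,
    {p | (∀ i, i ∉ I → ∃ n : ℤ, p.1 i = (n : ℝ)) ∧
         (∀ i ∈ I, p.2 i = 0) ∧ (∀ i, i ∉ I → p.2 i ≤ 0)}

/-!
If `(x, ξ) ∈ Λ_w` with `μ w ∈ P`, then `x - w ∈ relint τ_I` for `I = {i | w i < x i}` and
`μ (x - w) ∈ μ x - P ⊆ C`, so `I ∈ ℐ_C`.

Conversely, let `I ∈ ℐ_C`, `x` integral off `I`, and `c` the fractional part of `x` on `I`; one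
needs `n ∈ ℕ^I` with `μ x - μ (c + n) ∈ P`. A chamber meets no wall, so `C ⊆ C_I`. Take a generic
functional `F` negative on the generators of `C_I` outside its lineality space `L` and on a basis
of `L` made of generators, and `s` with `s + ∇_F ⊆ P`. Then `μ x - s - μ c` is a combination of
the `β_i`, `i ∈ I`, whose only negative coefficients sit at generators with `F > 0`, all in `L`.
Adding a large multiple of a positive relation among the generators in `L`, rounding up where
`F > 0` and moving the rounding error onto the generators with `F < 0`, which span `L`, makes the
coefficients nonnegative and integral where `F > 0`; their integral parts give `n` and their
fractional parts a point of `s + ∇_F`.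
-/

open Set Filter Topology

variable {N : ℕ}

def coordSubspace (J : Set (Fin N)) : Submodule ℝ (Fin N → ℝ) :=
  Submodule.pi Jᶜ fun _ => ⊥

@[simp]
lemma mem_coordSubspace {J : Set (Fin N)} {x : Fin N → ℝ} :
    x ∈ coordSubspace J ↔ ∀ i ∉ J, x i = 0 := by
  simp [coordSubspace]

lemma mem_tauCone_iff {J : Set (Fin N)} {x : Fin N → ℝ} :
    x ∈ tauCone J ↔ 0 ≤ x ∧ x ∈ coordSubspace J := by
  simp [tauCone, Pi.le_def, forall_and]

lemma tauCone_mono {I J : Set (Fin N)} (h : I ⊆ J) : tauCone I ⊆ tauCone J :=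
  fun _ hx i => ⟨(hx i).1, fun hi => (hx i).2 fun hI => hi (h hI)⟩

lemma add_mem_tauCone {J : Set (Fin N)} {x y : Fin N → ℝ} (hx : x ∈ tauCone J)
    (hy : y ∈ tauCone J) : x + y ∈ tauCone J := by
  rw [mem_tauCone_iff] at *
  exact ⟨add_nonneg hx.1 hy.1, add_mem hx.2 hy.2⟩

lemma smul_mem_tauCone {J : Set (Fin N)} {x : Fin N → ℝ} {r : ℝ} (hr : 0 ≤ r)
    (hx : x ∈ tauCone J) : r • x ∈ tauCone J := by
  rw [mem_tauCone_iff] at *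
  exact ⟨smul_nonneg hr hx.1, Submodule.smul_mem _ r hx.2⟩

lemma sum_mem_tauCone {ι : Type*} (s : Finset ι) {J : Set (Fin N)} {x : ι → Fin N → ℝ}
    (hx : ∀ i ∈ s, x i ∈ tauCone J) : ∑ i ∈ s, x i ∈ tauCone J := by
  simp only [mem_tauCone_iff] at *
  exact ⟨Finset.sum_nonneg fun i hi => (hx i hi).1, Submodule.sum_mem _ fun i hi => (hx i hi).2⟩

lemma single_mem_coordSubspace {J : Set (Fin N)} {i : Fin N} (hi : i ∈ J) (r : ℝ) :
    Pi.single i r ∈ coordSubspace J := by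
  rw [mem_coordSubspace]
  intro j hj
  rw [Pi.single_apply, if_neg (by rintro rfl; exact hj hi)]

lemma single_mem_tauCone {J : Set (Fin N)} {i : Fin N} (hi : i ∈ J) :
    Pi.single i 1 ∈ tauCone J :=
  mem_tauCone_iff.2 ⟨Pi.single_nonneg.2 zero_le_one, single_mem_coordSubspace hi 1⟩

lemma indicator_mem_tauCone {I : Set (Fin N)} {x : Fin N → ℝ} (hx : x ∈ tauCone I)
    (K : Set (Fin N)) : K.indicator x ∈ tauCone (I ∩ K) := by
  intro i
  by_cases hi : i ∈ K
  · simpa [hi] using hx i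
  · simp [hi]

lemma tauRelInt_subset_tauCone (I : Set (Fin N)) : tauRelInt I ⊆ tauCone I := fun x hx i =>
  ⟨by by_cases hi : i ∈ I; exacts [((hx i).1 hi).le, ((hx i).2 hi).ge], (hx i).2⟩

lemma map_eq_sum_smul {E : Type*} [AddCommGroup E] [Module ℝ E]
    (μ : (Fin N → ℝ) →ₗ[ℝ] E) (x : Fin N → ℝ) : μ x = ∑ i, x i • μ (Pi.single i 1) := by
  conv_lhs => rw [← Finset.univ_sum_single x]
  simp [← map_smul, ← Pi.single_smul']

lemma IsGKZChamber.subset_image_tauCone {k : ℕ} {μ : (Fin N → ℝ) →ₗ[ℝ] (Fin k → ℝ)}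
    {C : Set (Fin k → ℝ)} (hC : IsGKZChamber μ C) {I : Set (Fin N)} (hI : I ∈ chamberIdx μ C) :
    C ⊆ μ '' tauCone I := by
  obtain ⟨x₀, -, rfl⟩ := hC
  obtain ⟨z, hzC, hz⟩ := hI
  have hfr : ∀ y ∈ connectedComponentIn (gkzGood μ) x₀, y ∉ frontier (μ '' tauCone I) :=
    fun y hy => connectedComponentIn_subset _ _ hy I
  have hzΓ : μ z ∈ μ '' tauCone I := mem_image_of_mem μ (tauRelInt_subset_tauCone I hz)
  refine Subset.trans ?_ interior_subset
  refine isPreconnected_connectedComponentIn.subset_of_closure_inter_subset isOpen_interior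
    ⟨μ z, hzC, by_contra fun h => hfr _ hzC ⟨subset_closure hzΓ, h⟩⟩ ?_
  rintro y ⟨hcl, hy⟩
  by_contra h
  exact hfr y hy ⟨closure_mono interior_subset hcl, h⟩

section Lineality

variable {E : Type*} [AddCommGroup E] [Module ℝ E] (μ : (Fin N → ℝ) →ₗ[ℝ] E) (I : Set (Fin N))

def linealityIdx : Set (Fin N) :=
  {i | i ∈ I ∧ -μ (Pi.single i 1) ∈ μ '' tauCone I}

lemma linealityIdx_subset : linealityIdx μ I ⊆ I := fun _ hi => hi.1

variable {μ I}

lemma eq_zero_of_neg_map_mem_image_tauCone {u : Fin N → ℝ}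
    (hu : u ∈ tauCone (I \ linealityIdx μ I)) (hneg : -μ u ∈ μ '' tauCone I) : u = 0 := by
  by_contra hne
  obtain ⟨i, hi⟩ := Function.ne_iff.1 hne
  have hpos : 0 < u i := lt_of_le_of_ne (hu i).1 (Ne.symm hi)
  have hiI : i ∈ I \ linealityIdx μ I := by_contra fun h => hi ((hu i).2 h)
  obtain ⟨t, ht, hμt⟩ := hneg
  -- `-(u i) • β i = μ t + μ (u - u i • e i)` exhibits `-β i` in the cone
  refine hiI.2 ⟨hiI.1, (u i)⁻¹ • (t + (u - u i • Pi.single i 1)), ?_, ?_⟩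
  · refine smul_mem_tauCone (inv_nonneg.2 hpos.le) fun j => ?_
    by_cases hj : j = i
    · subst hj
      refine ⟨?_, fun h => (h hiI.1).elim⟩
      simpa using (ht _).1
    · have huj := hu j
      simp only [Pi.add_apply, Pi.sub_apply, Pi.smul_apply, Pi.single_eq_of_ne hj,
        smul_zero, sub_zero]
      exact ⟨add_nonneg (ht j).1 huj.1, fun hjI => by
        rw [(ht j).2 hjI, huj.2 fun h => hjI h.1, add_zero]⟩
  · rw [map_smul, map_add, map_sub, hμt, map_smul]
    rw [show -μ u + (μ u - u i • μ (Pi.single i 1)) = -(u i • μ (Pi.single i 1)) by abel,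
      smul_neg, smul_smul, inv_mul_cancel₀ hpos.ne', one_smul]

variable (μ I) in
lemma exists_relation_linealityIdx :
    ∃ θ ∈ tauCone (linealityIdx μ I), (∀ i ∈ linealityIdx μ I, 1 ≤ θ i) ∧ μ θ = 0 := by
  set A := linealityIdx μ I
  have hneg : ∀ i, ∃ t ∈ tauCone I, i ∈ A → μ t = -μ (Pi.single i 1) := by
    intro i
    by_cases hi : i ∈ A
    · obtain ⟨t, ht, hμt⟩ := hi.2
      exact ⟨t, ht, fun _ => hμt⟩
    · exact ⟨0, fun _ => by simp, fun h => (hi h).elim⟩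
  choose t ht hμt using hneg
  set θ := ∑ i ∈ Finset.univ.filter (· ∈ A), (Pi.single i 1 + t i)
  have hθI : θ ∈ tauCone I := sum_mem_tauCone _ fun i hi =>
    add_mem_tauCone (single_mem_tauCone (Finset.mem_filter.1 hi).2.1) (ht i)
  have hμθ : μ θ = 0 := by
    rw [map_sum]
    exact Finset.sum_eq_zero fun i hi => by
      rw [map_add, hμt i (Finset.mem_filter.1 hi).2, add_neg_cancel]
  have hθ1 : ∀ i ∈ A, 1 ≤ θ i := fun i hi => by
    have hle := Finset.single_le_sum (f := fun j => (Pi.single j 1 + t j : Fin N → ℝ) i)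
      (fun j hj => add_nonneg (single_mem_tauCone (i := j) (Finset.mem_filter.1 hj).2 i).1
        (ht j i).1)
      (Finset.mem_filter.2 ⟨Finset.mem_univ i, hi⟩)
    simp only [Pi.add_apply, Pi.single_eq_same] at hle
    simpa [θ, Finset.sum_apply] using (le_add_of_nonneg_right (ht i i).1).trans hle
  -- off the lineality indices, `θ` is a nonnegative combination lying in `-C_I`
  have hout : Aᶜ.indicator θ = 0 := eq_zero_of_neg_map_mem_image_tauCone
    (indicator_mem_tauCone hθI Aᶜ)
    ⟨A.indicator θ, tauCone_mono inter_subset_left (indicator_mem_tauCone hθI A), by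
      rw [eq_neg_iff_add_eq_zero, ← map_add, indicator_self_add_compl, hμθ]⟩
  refine ⟨A.indicator θ, tauCone_mono inter_subset_right (indicator_mem_tauCone hθI A),
    fun i hi => by simpa [hi] using hθ1 i hi, ?_⟩
  rw [← add_zero (A.indicator θ), ← hout, indicator_self_add_compl, hμθ]

lemma eq_zero_of_mem_tauCone_diff_linealityIdx_union {A₀ : Set (Fin N)}
    (hA₀ : A₀ ⊆ linealityIdx μ I)
    (hind : LinearIndepOn ℝ (fun i => μ (Pi.single i 1)) A₀) {w : Fin N → ℝ}
    (hw : w ∈ tauCone (I \ linealityIdx μ I ∪ A₀)) (hw0 : μ w = 0) : w = 0 := by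
  set A := linealityIdx μ I
  have hout : Aᶜ.indicator w = 0 := by
    refine eq_zero_of_neg_map_mem_image_tauCone (μ := μ) (I := I)
      (tauCone_mono ?_ (indicator_mem_tauCone hw Aᶜ))
      ⟨A.indicator w, tauCone_mono ?_ (indicator_mem_tauCone hw A), ?_⟩
    · rintro i ⟨hi | hi, hiA⟩
      exacts [hi, (hiA (hA₀ hi)).elim]
    · rintro i ⟨hi | hi, -⟩
      exacts [hi.1, (hA₀ hi).1]
    · rw [eq_neg_iff_add_eq_zero, ← map_add, indicator_self_add_compl, hw0]
  have hsupp : ∀ i ∉ A₀, w i = 0 := by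
    intro i hi
    by_cases hiA : i ∈ A
    · exact (hw i).2 (by rintro (h | h); exacts [h.2 hiA, hi h])
    · simpa [hiA] using congrFun hout i
  have hA₀w := linearIndepOn_iff'.1 hind (Finset.univ.filter (· ∈ A₀)) w (by simp) (by
    rw [Finset.sum_filter_of_ne fun i _ h => by_contra fun hi => h (by simp [hsupp i hi]),
      ← map_eq_sum_smul, hw0])
  funext i
  by_cases hi : i ∈ A₀
  · exact hA₀w i (by simp [hi])
  · exact hsupp i hi

end Lineality

section Functional

variable {E : Type*} [NormedAddCommGroup E] [NormedSpace ℝ E]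

/-- Gordan's alternative. -/
lemma exists_dual_neg_of_pointed (μ : (Fin N → ℝ) →ₗ[ℝ] E) (J : Set (Fin N))
    (hJ : ∀ w ∈ tauCone J, μ w = 0 → w = 0) :
    ∃ f : StrongDual ℝ E, ∀ j ∈ J, f (μ (Pi.single j 1)) < 0 := by
  set K := μ '' (stdSimplex ℝ (Fin N) ∩ coordSubspace J)
  have hK : IsCompact K :=
    ((isCompact_stdSimplex ℝ (Fin N)).inter_right
      (Submodule.closed_of_finiteDimensional _)).image μ.continuous_of_finiteDimensional
  have hK0 : (0 : E) ∉ K := by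
    rintro ⟨w, ⟨hw, hwJ⟩, hw0⟩
    have h1 := hw.2
    rw [hJ w (mem_tauCone_iff.2 ⟨hw.1, hwJ⟩) hw0] at h1
    simp at h1
  obtain ⟨f, u, hfK, hu⟩ := geometric_hahn_banach_closed_point
    (((convex_stdSimplex ℝ (Fin N)).inter (coordSubspace J).convex).linear_image μ)
    hK.isClosed hK0
  refine ⟨f, fun j hj => ?_⟩
  have := hfK _ ⟨_, ⟨single_mem_stdSimplex ℝ j, single_mem_coordSubspace hj 1⟩, rfl⟩
  rw [map_zero] at hu
  linarith

lemma exists_dual_neg_and_ne_zero (S T : Finset E) (f : StrongDual ℝ E)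
    (hf : ∀ v ∈ S, f v < 0) (hT : ∀ v ∈ T, v ≠ 0) :
    ∃ F : StrongDual ℝ E, (∀ v ∈ S, F v < 0) ∧ ∀ v ∈ T, F v ≠ 0 := by
  induction T using Finset.induction_on with
  | empty => exact ⟨f, hf, by simp⟩
  | insert v T _ ih =>
    obtain ⟨F, hFS, hFT⟩ := ih fun w hw => hT w (Finset.mem_insert_of_mem hw)
    obtain ⟨g, hg⟩ := SeparatingDual.exists_ne_zero (R := ℝ) (hT v (Finset.mem_insert_self v T))
    -- perturb `F` by a small positive multiple of a functional not vanishing at `v`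
    have hlim : ∀ w, Tendsto (fun σ : ℝ => (F + σ • g) w) (𝓝[>] 0) (𝓝 (F w)) := fun w => by
      have : Continuous fun σ : ℝ => F w + σ * g w := by fun_prop
      simpa using (this.tendsto 0).mono_left nhdsWithin_le_nhds
    have hS : ∀ᶠ σ in 𝓝[>] (0 : ℝ), ∀ w ∈ S, (F + σ • g) w < 0 :=
      (eventually_all_finset S).2 fun w hw => (hlim w).eventually_lt_const (hFS w hw)
    have hT' : ∀ᶠ σ in 𝓝[>] (0 : ℝ), ∀ w ∈ T, (F + σ • g) w ≠ 0 :=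
      (eventually_all_finset T).2 fun w hw => (hlim w).eventually_ne (hFT w hw)
    have hv : ∀ᶠ σ in 𝓝[>] (0 : ℝ), (F + σ • g) v ≠ 0 := by
      by_cases hFv : F v = 0
      · filter_upwards [self_mem_nhdsWithin] with σ hσ
        simp [hFv, (mem_Ioi.1 hσ).ne', hg]
      · exact (hlim v).eventually_ne hFv
    obtain ⟨σ, hσS, hσT, hσv⟩ := (hS.and (hT'.and hv)).exists
    exact ⟨F + σ • g, hσS, Finset.forall_mem_insert _ _ _ |>.2 ⟨hσv, hσT⟩⟩

lemma exists_adapted_functional (μ : (Fin N → ℝ) →ₗ[ℝ] E) (hβ0 : ∀ i, μ (Pi.single i 1) ≠ 0)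
    (I : Set (Fin N)) :
    ∃ F : E →ₗ[ℝ] ℝ, (∀ i, F (μ (Pi.single i 1)) ≠ 0) ∧
      (∀ i ∈ I \ linealityIdx μ I, F (μ (Pi.single i 1)) < 0) ∧
      ∀ i ∈ linealityIdx μ I, μ (Pi.single i 1) ∈
        (coordSubspace {j | j ∈ linealityIdx μ I ∧ F (μ (Pi.single j 1)) < 0}).map μ := by
  set A := linealityIdx μ I
  obtain ⟨A₀, hA₀, -, hspan, hind⟩ := exists_linearIndepOn_extension
    (v := fun i => μ (Pi.single i 1)) (linearIndepOn_empty ℝ _) (empty_subset A)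
  obtain ⟨f, hf⟩ := exists_dual_neg_of_pointed μ _ fun w hw hw0 =>
    eq_zero_of_mem_tauCone_diff_linealityIdx_union hA₀ hind hw hw0
  obtain ⟨F, hFS, hFT⟩ := exists_dual_neg_and_ne_zero
    ((I \ A ∪ A₀).toFinset.image fun i => μ (Pi.single i 1))
    (Finset.univ.image fun i => μ (Pi.single i 1)) f (by simpa using hf) (by simpa using hβ0)
  have hF : ∀ i ∈ I \ A ∪ A₀, F (μ (Pi.single i 1)) < 0 := fun i hi =>
    hFS _ (Finset.mem_image_of_mem _ (by simpa using hi))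
  refine ⟨F, fun i => hFT _ (Finset.mem_image_of_mem _ (Finset.mem_univ i)),
    fun i hi => hF i (Or.inl hi),
    fun i hi => Submodule.span_le.2 ?_ (hspan (mem_image_of_mem _ hi))⟩
  rintro _ ⟨j, hj, rfl⟩
  have hj' : j ∈ {j | j ∈ A ∧ F (μ (Pi.single j 1)) < 0} := ⟨hA₀ hj, hF j (Or.inr hj)⟩
  exact Submodule.mem_map_of_mem (single_mem_coordSubspace hj' 1)

end Functional

section Rounding

variable {E : Type*} [AddCommGroup E] [Module ℝ E] {μ : (Fin N → ℝ) →ₗ[ℝ] E}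

lemma map_coordSubspace_le {A B : Set (Fin N)}
    (h : ∀ i ∈ A, μ (Pi.single i 1) ∈ (coordSubspace B).map μ) :
    (coordSubspace A).map μ ≤ (coordSubspace B).map μ := by
  rintro _ ⟨v, hv, rfl⟩
  rw [map_eq_sum_smul]
  refine Submodule.sum_mem _ fun i _ => ?_
  by_cases hi : i ∈ A
  · exact Submodule.smul_mem _ _ (h i hi)
  · simp [mem_coordSubspace.1 hv i hi]

lemma exists_nat_add_mem_tauCone_of_lift {A Neg : Set (Fin N)} (hNeg : Neg ⊆ A)
    {θ : Fin N → ℝ} (hθ : θ ∈ tauCone A) (hθ1 : ∀ i ∈ A, 1 ≤ θ i) (hμθ : μ θ = 0)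
    {x : Fin N → Fin N → ℝ} (hxNeg : ∀ i, x i ∈ coordSubspace Neg)
    (hμx : ∀ i ∈ A, μ (x i) = μ (Pi.single i 1)) {v : Fin N → ℝ} (hv : v ∈ coordSubspace Neg) :
    ∃ (m : Fin N → ℕ) (r : Fin N → ℝ), (∀ i ∉ A \ Neg, m i = 0) ∧ r ∈ tauCone Neg ∧
      μ v = μ (fun i => (m i : ℝ)) + μ r := by
  -- Round `L • θ` up on `A \ Neg` and move the rounding error `δ` into `Neg` through the `x i`;
  -- `L` dominates every coefficient that could turn negative on `Neg`.
  set L := ∑ j, (|v j| + ∑ i, |x i j|)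
  have hL : ∀ j, |v j| + ∑ i, |x i j| ≤ L := fun j =>
    Finset.single_le_sum (f := fun j => |v j| + ∑ i, |x i j|) (fun _ _ => by positivity)
      (Finset.mem_univ j)
  have hL0 : 0 ≤ L := Finset.sum_nonneg fun _ _ => by positivity
  set m : Fin N → ℕ := fun i => if i ∈ A \ Neg then ⌈L * θ i⌉₊ else 0
  set δ : Fin N → ℝ := fun i => if i ∈ A \ Neg then ⌈L * θ i⌉₊ - L * θ i else 0
  have hδ : ∀ i, 0 ≤ δ i ∧ δ i ≤ 1 := fun i => by
    by_cases hi : i ∈ A \ Neg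
    · simp only [δ, if_pos hi]
      have := Nat.ceil_lt_add_one (mul_nonneg hL0 (hθ i).1)
      constructor <;> linarith [Nat.le_ceil (L * θ i)]
    · simp only [δ, if_neg hi, le_refl, zero_le_one, and_self]
  set r := v + L • Neg.indicator θ - ∑ i, δ i • x i
  have hrNeg : r ∈ coordSubspace Neg :=
    sub_mem (add_mem hv (Submodule.smul_mem _ _ (by simp +contextual)))
      (Submodule.sum_mem _ fun i _ => Submodule.smul_mem _ _ (hxNeg i))
  have hr0 : ∀ j ∈ Neg, 0 ≤ r j := fun j hj => by
    have hxδ : ∑ i, δ i * x i j ≤ ∑ i, |x i j| := Finset.sum_le_sum fun i _ => by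
      refine (le_abs_self _).trans ?_
      rw [abs_mul, abs_of_nonneg (hδ i).1]
      exact mul_le_of_le_one_left (abs_nonneg _) (hδ i).2
    have hθj : L ≤ L * θ j := le_mul_of_one_le_right hL0 (hθ1 j (hNeg hj))
    simp only [r, Pi.sub_apply, Pi.add_apply, Pi.smul_apply, Finset.sum_apply,
      indicator_of_mem hj, smul_eq_mul]
    linarith [neg_abs_le (v j), hL j]
  refine ⟨m, r, fun i hi => if_neg hi, mem_tauCone_iff.2 ⟨fun j => ?_, hrNeg⟩, ?_⟩
  · by_cases hj : j ∈ Neg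
    · exact hr0 j hj
    · exact (mem_coordSubspace.1 hrNeg j hj).symm.le
  have hsum : (fun i => (m i : ℝ)) + r = v + L • θ + (δ - ∑ i, δ i • x i) := by
    funext j
    simp only [r, m, δ, Pi.add_apply, Pi.sub_apply, Pi.smul_apply, smul_eq_mul, Finset.sum_apply]
    by_cases hjA : j ∈ A <;> by_cases hjN : j ∈ Neg <;> simp [hjA, hjN, (hθ j).2] <;> ring
  have hδx : μ δ = μ (∑ i, δ i • x i) := by
    rw [map_eq_sum_smul, map_sum]
    refine Finset.sum_congr rfl fun i _ => ?_
    by_cases hi : i ∈ A \ Neg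
    · rw [map_smul, hμx i hi.1]
    · simp only [δ, if_neg hi, zero_smul, map_zero]
  rw [← map_add, hsum, map_add, map_sub, hδx, sub_self, add_zero, map_add, map_smul, hμθ,
    smul_zero, add_zero]

lemma exists_nat_add_mem_tauCone {A Neg : Set (Fin N)} (hNeg : Neg ⊆ A) {θ : Fin N → ℝ}
    (hθ : θ ∈ tauCone A) (hθ1 : ∀ i ∈ A, 1 ≤ θ i) (hμθ : μ θ = 0)
    (hspan : ∀ i ∈ A, μ (Pi.single i 1) ∈ (coordSubspace Neg).map μ)
    {v : Fin N → ℝ} (hv : v ∈ coordSubspace A) :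
    ∃ (m : Fin N → ℕ) (r : Fin N → ℝ), (∀ i ∉ A \ Neg, m i = 0) ∧ r ∈ tauCone Neg ∧
      μ v = μ (fun i => (m i : ℝ)) + μ r := by
  obtain ⟨v', hv', hμv'⟩ := map_coordSubspace_le hspan (Submodule.mem_map_of_mem hv)
  have hx : ∀ i, ∃ x ∈ coordSubspace Neg, i ∈ A → μ x = μ (Pi.single i 1) := by
    intro i
    by_cases hi : i ∈ A
    · obtain ⟨x, hx, hμx⟩ := hspan i hi
      exact ⟨x, hx, fun _ => hμx⟩
    · exact ⟨0, zero_mem _, fun h => (hi h).elim⟩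
  choose x hxNeg hμx using hx
  rw [← hμv']
  exact exists_nat_add_mem_tauCone_of_lift hNeg hθ hθ1 hμθ hxNeg hμx hv'

end Rounding

section Representation

variable {E : Type*} [AddCommGroup E] [Module ℝ E] {μ : (Fin N → ℝ) →ₗ[ℝ] E}

lemma add_map_mem_of_zonotope_subset {P : Set E} {s : E} {F : E →ₗ[ℝ] ℝ}
    (hs : {s} + ∑ i ∈ Finset.univ.filter (fun i => F (μ (Pi.single i 1)) ≤ 0),
      segment ℝ 0 (μ (Pi.single i 1)) ⊆ P)
    {z : Fin N → ℝ} (hz : ∀ i, 0 ≤ z i ∧ z i ≤ 1)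
    (hzF : ∀ i, z i ≠ 0 → F (μ (Pi.single i 1)) < 0) : s + μ z ∈ P := by
  refine hs (add_mem_add rfl ?_)
  rw [map_eq_sum_smul, ← Finset.sum_filter_of_ne fun i _ h => (hzF i (left_ne_zero_of_smul h)).le]
  refine finsetSum_mem_finsetSum _ _ _ fun i _ => ?_
  rw [segment_eq_image]
  exact ⟨z i, hz i, by simp⟩

variable {I : Set (Fin N)} {F : E →ₗ[ℝ] ℝ}

lemma exists_mem_tauCone_natCast_floor_eq
    (hFB : ∀ i ∈ I \ linealityIdx μ I, F (μ (Pi.single i 1)) < 0)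
    (hFA : ∀ i ∈ linealityIdx μ I, μ (Pi.single i 1) ∈
      (coordSubspace {j | j ∈ linealityIdx μ I ∧ F (μ (Pi.single j 1)) < 0}).map μ)
    {u : E} (hu : u ∈ μ '' tauCone I) {c : Fin N → ℝ} (hc : c ∈ tauCone I) :
    ∃ a ∈ tauCone I, (∀ i, ¬F (μ (Pi.single i 1)) < 0 → (⌊a i⌋₊ : ℝ) = a i) ∧
      μ a = u - μ ({i | F (μ (Pi.single i 1)) < 0}ᶜ.indicator c) := by
  set A := linealityIdx μ I
  set Neg := {j | j ∈ A ∧ F (μ (Pi.single j 1)) < 0}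
  obtain ⟨t, ht, rfl⟩ := hu
  obtain ⟨θ, hθ, hθ1, hμθ⟩ := exists_relation_linealityIdx μ I
  have hA : ∀ i ∈ I, ¬F (μ (Pi.single i 1)) < 0 → i ∈ A := fun i hi hF =>
    by_contra fun h => hF (hFB i ⟨hi, h⟩)
  obtain ⟨m, r, hm, hr, hμ⟩ := exists_nat_add_mem_tauCone (fun _ h => h.1) hθ hθ1 hμθ hFA
    (v := A.indicator t - {i | F (μ (Pi.single i 1)) < 0}ᶜ.indicator c) (by
      refine mem_coordSubspace.2 fun i (hi : i ∉ A) => ?_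
      by_cases hF : F (μ (Pi.single i 1)) < 0
      · simp [hi, hF]
      · simp [hi, hF, (hc i).2 fun h => hi (hA i h hF)])
  refine ⟨Aᶜ.indicator t + (fun i => (m i : ℝ)) + r, add_mem_tauCone (add_mem_tauCone
    (tauCone_mono inter_subset_left (indicator_mem_tauCone ht _)) fun i => ?_)
    (tauCone_mono (fun i hi => linealityIdx_subset μ I hi.1) hr), fun i hF => ?_, ?_⟩
  · exact ⟨Nat.cast_nonneg _, fun hi => by
      simp [hm i fun h => hi (linealityIdx_subset μ I h.1)]⟩
  · have hrt : Aᶜ.indicator t i = 0 ∧ r i = 0 := by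
      refine ⟨?_, (hr i).2 fun h => hF h.2⟩
      by_cases hiA : i ∈ A
      · simp [hiA]
      · simp [hiA, (ht i).2 fun hi => hiA (hA i hi hF)]
    simp [hrt]
  · rw [map_add, map_add, add_assoc, ← hμ, map_sub, ← add_sub_assoc, ← map_add,
      indicator_compl_add_self]

end Representation

section Skeleton

variable {k : ℕ} {μ : (Fin N → ℝ) →ₗ[ℝ] (Fin k → ℝ)} {P C : Set (Fin k → ℝ)}

lemma exists_nat_sub_map_add_mem [Nonempty (Fin N)] (hβ0 : ∀ i, μ (Pi.single i 1) ≠ 0)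
    (hlarge : ∀ f : (Fin k → ℝ) →ₗ[ℝ] ℝ, f ≠ 0 → (∀ i, f (μ (Pi.single i 1)) ≠ 0) →
      ∃ s : Fin k → ℝ, {s} + ∑ i ∈ Finset.univ.filter (fun i => f (μ (Pi.single i 1)) ≤ 0),
        segment ℝ 0 (μ (Pi.single i 1)) ⊆ P)
    (hC : IsGKZChamber μ C) {I : Set (Fin N)} (hI : I ∈ chamberIdx μ C)
    {y : Fin k → ℝ} (hy : ∀ p ∈ P, y - p ∈ C) {c : Fin N → ℝ} (hc : c ∈ tauCone I)
    (hc1 : ∀ i, c i < 1) :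
    ∃ n : Fin N → ℕ, (∀ i ∉ I, n i = 0) ∧ y - μ (c + fun i => (n i : ℝ)) ∈ P := by
  obtain ⟨F, hF0, hFB, hFA⟩ := exists_adapted_functional μ hβ0 I
  obtain ⟨s, hs⟩ := hlarge F (fun h => hF0 (Classical.arbitrary _) (by simp [h])) hF0
  set Neg := {i | F (μ (Pi.single i 1)) < 0}
  have hsc : s + μ (Neg.indicator c) ∈ P := by
    refine add_map_mem_of_zonotope_subset hs (fun i => ?_) fun i hi => ?_
    · by_cases hi : i ∈ Neg <;> simp [hi, (hc i).1, (hc1 i).le]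
    · by_contra hF
      exact hi (by simp [Neg, hF])
  obtain ⟨a, ha, haF, hμa⟩ := exists_mem_tauCone_natCast_floor_eq hFB hFA
    (hC.subset_image_tauCone hI (hy _ hsc)) hc
  refine ⟨fun i => ⌊a i⌋₊, fun i hi => by simp [(ha i).2 hi], ?_⟩
  have hμc : μ c = μ (Neg.indicator c) + μ (Negᶜ.indicator c) := by
    rw [← map_add, indicator_self_add_compl]
  have hya : y - μ (c + fun i => (⌊a i⌋₊ : ℝ)) = s + μ (a - fun i => (⌊a i⌋₊ : ℝ)) := by
    rw [map_add, map_sub, hμa, hμc]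
    abel
  rw [hya]
  refine add_map_mem_of_zonotope_subset hs (fun i => ⟨sub_nonneg.2 (Nat.floor_le (ha i).1),
    by simp only [Pi.sub_apply]; linarith [Nat.lt_floor_add_one (a i)]⟩)
    fun i hi => by_contra fun hF => hi ?_
  simp [haF i hF]

lemma mem_LambdaGIT_of_mem_LambdaWin {W : Set (Fin k → ℝ)} (hW : W ⊆ P) {x ξ : Fin N → ℝ}
    (hx : ∀ p ∈ P, μ x - p ∈ C) (h : (x, ξ) ∈ LambdaWin μ W) : (x, ξ) ∈ LambdaGIT μ C := by
  simp only [LambdaWin, mem_iUnion] at h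
  obtain ⟨w, hw, hxw⟩ := h
  have key : ∀ i, (0 < x i - w i → ξ i = 0) ∧ (¬0 < x i - w i → x i = w i ∧ ξ i ≤ 0) := by
    intro i
    rcases (hxw i : (0 < x i - w i ∧ ξ i = 0) ∨ (x i - w i = 0 ∧ ξ i ≤ 0)) with h | h
    · exact ⟨fun _ => h.2, fun h' => (h' h.1).elim⟩
    · exact ⟨fun h' => absurd h.1 h'.ne', fun _ => ⟨sub_eq_zero.1 h.1, h.2⟩⟩
  simp only [LambdaGIT, mem_iUnion]
  refine ⟨{i | 0 < x i - w i}, ⟨x - fun i => (w i : ℝ), ?_, fun i => ⟨id, fun hi => ?_⟩⟩,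
    fun i hi => ⟨w i, ((key i).2 hi).1⟩, fun i hi => (key i).1 hi, fun i hi => ((key i).2 hi).2⟩
  · rw [mem_preimage, map_sub]
    exact hx _ (hW hw)
  · exact sub_eq_zero.2 ((key i).2 hi).1

lemma mem_LambdaWin_of_mem_LambdaGIT [Nonempty (Fin N)] (hβ0 : ∀ i, μ (Pi.single i 1) ≠ 0)
    (hlat : ∀ w : Fin N → ℤ, ∀ j, ∃ n : ℤ, μ (fun i => (w i : ℝ)) j = (n : ℝ))
    (hlarge : ∀ f : (Fin k → ℝ) →ₗ[ℝ] ℝ, f ≠ 0 → (∀ i, f (μ (Pi.single i 1)) ≠ 0) →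
      ∃ s : Fin k → ℝ, {s} + ∑ i ∈ Finset.univ.filter (fun i => f (μ (Pi.single i 1)) ≤ 0),
        segment ℝ 0 (μ (Pi.single i 1)) ⊆ P)
    (hC : IsGKZChamber μ C) {x ξ : Fin N → ℝ} (hx : ∀ p ∈ P, μ x - p ∈ C)
    (h : (x, ξ) ∈ LambdaGIT μ C) :
    (x, ξ) ∈ LambdaWin μ (P ∩ {v | ∀ j, ∃ n : ℤ, v j = (n : ℝ)}) := by
  simp only [LambdaGIT, mem_iUnion] at h
  obtain ⟨I, hI, hxZ, hξI, hξ⟩ := h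
  -- the lattice point is `x - c - n`, with `c` the fractional part of `x` on `I`
  set c := I.indicator fun i => Int.fract (x i)
  obtain ⟨n, hnI, hn⟩ := exists_nat_sub_map_add_mem hβ0 hlarge hC hI hx (c := c)
    (fun i => by by_cases hi : i ∈ I <;> simp [c, hi, Int.fract_nonneg])
    (fun i => by by_cases hi : i ∈ I <;> simp [c, hi, Int.fract_lt_one])
  have hxw : ∀ i, x i - (⌊x i⌋ - n i : ℤ) = c i + n i := fun i => by
    by_cases hi : i ∈ I
    · simp only [c, indicator_of_mem hi, Int.fract]
      push_cast
      ring
    · obtain ⟨z, hz : x i = z⟩ := hxZ i hi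
      simp [c, hi, hnI i hi, hz]
  simp only [LambdaWin, mem_iUnion]
  refine ⟨fun i => ⌊x i⌋ - n i, ⟨?_, hlat _⟩, fun i => ?_⟩
  · have hw : (fun i => ((⌊x i⌋ - n i : ℤ) : ℝ)) = x - (c + fun i => (n i : ℝ)) :=
      funext fun i => by rw [Pi.sub_apply, Pi.add_apply, ← hxw i]; ring
    rw [hw, map_sub]
    exact hn
  · show (0 < x i - _ ∧ ξ i = 0) ∨ (x i - _ = 0 ∧ ξ i ≤ 0)
    rw [hxw i]
    by_cases hi : i ∈ I
    · rcases (add_nonneg (show 0 ≤ c i by simp [c, hi, Int.fract_nonneg])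
        (Nat.cast_nonneg (n i))).lt_or_eq with hpos | hzero
      · exact Or.inl ⟨hpos, hξI i hi⟩
      · exact Or.inr ⟨hzero.symm, (hξI i hi).le⟩
    · exact Or.inr ⟨by simp [c, hi, hnI i hi], hξ i hi⟩

end Skeleton

theorem window_skeleton_eq_GIT_skeleton_over_stable_region
    {N k : ℕ} (hk : 1 ≤ k) (hNk : k ≤ N)
    (μ : (Fin N → ℝ) →ₗ[ℝ] (Fin k → ℝ))
    (hlat : ∀ w : Fin N → ℤ, ∀ j, ∃ n : ℤ, μ (fun i => (w i : ℝ)) j = (n : ℝ))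
    (β : Fin N → (Fin k → ℝ)) (hβ : ∀ i, β i = μ (Pi.single i 1))
    (hβ0 : ∀ i, β i ≠ 0)
    (P : Set (Fin k → ℝ))
    -- `P` is large enough: every half-space zonotope `∇_H` fits into `P` after translation
    (hlarge : ∀ f : (Fin k → ℝ) →ₗ[ℝ] ℝ, f ≠ 0 → (∀ i, f (β i) ≠ 0) →
      ∃ s : Fin k → ℝ,
        {s} + ∑ i ∈ Finset.univ.filter (fun i => f (β i) ≤ 0), segment ℝ 0 (β i) ⊆ P)
    (C : Set (Fin k → ℝ)) (hC : IsGKZChamber μ C) :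
    LambdaWin μ (P ∩ {v | ∀ j, ∃ n : ℤ, v j = (n : ℝ)}) ∩
        ((μ ⁻¹' {x | ∀ p ∈ P, x - p ∈ C}) ×ˢ (Set.univ : Set (Fin N → ℝ))) =
      LambdaGIT μ C ∩
        ((μ ⁻¹' {x | ∀ p ∈ P, x - p ∈ C}) ×ˢ (Set.univ : Set (Fin N → ℝ))) := by
  obtain rfl : β = fun i => μ (Pi.single i 1) := funext hβ
  have : Nonempty (Fin N) := ⟨⟨0, by omega⟩⟩
  ext ⟨x, ξ⟩
  simp only [mem_inter_iff, mem_prod, mem_preimage, mem_univ, and_true]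
  exact and_congr_left fun hx => ⟨mem_LambdaGIT_of_mem_LambdaWin inter_subset_left hx,
    mem_LambdaWin_of_mem_LambdaGIT hβ0 hlat hlarge hC hx⟩
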